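/- Let (S, μ, η) be a monad on C equipped with a differential combinator transformation ∂, and define λ_A := ⟨S(π₁), S(π₁+π₄)∘∂_{A×A}⟩ : S(A×A) → S(A)×S(A). Then λ is compatible with the negative map of the biproduct tangent structure: ⟨π₁, −π₂⟩∘λ_A = λ_A∘S(⟨π₁, −π₂⟩) as morphisms S(A×A) → S(A)×S(A). -/

import Mathlib

/-!
By [DC.1] and [DC.2], for fixed `f` the map `g ↦ ∂ ≫ S(f π₁ + g π₂)` is additive, hence sends
`-g` to the negative. Naturality of `∂` moves `S⟨π₁, -π₂⟩` past `∂`, where it turns `π₁ + π₄`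
into `π₁ - π₄`, so the second component of `λ` changes sign, while the first is untouched.
-/

open CategoryTheory CategoryTheory.Limits

universe v u

variable {C : Type u} [Category.{v} C] [Preadditive C] [HasBinaryBiproducts C]

/-- A differential combinator transformation on a monad `S`. -/
structure DiffCombTrans (S : Monad C) where
  d : ∀ A : C, S.obj A ⟶ S.obj (A ⊞ A)
  natural : ∀ {A B : C} (f : A ⟶ B), S.map f ≫ d B = d A ≫ S.map (biprod.map f f)
  dc1 : ∀ A : C, d A ≫ S.map biprod.fst = 0
  dc2 : ∀ A : C,
    d A ≫ S.map (biprod.lift biprod.fst (biprod.lift biprod.snd biprod.snd)) =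
      d A ≫ S.map (biprod.lift biprod.fst (biprod.lift biprod.snd 0)) +
      d A ≫ S.map (biprod.lift biprod.fst (biprod.lift 0 biprod.snd))
  dc3 : ∀ A : C, S.η.app A ≫ d A = biprod.lift 0 (𝟙 A) ≫ S.η.app (A ⊞ A)
  dc4 : ∀ A : C, S.μ.app A ≫ d A =
    d (S.obj A) ≫
      S.map (biprod.fst ≫ S.map (biprod.lift (𝟙 A) 0) + biprod.snd ≫ d A) ≫
      S.μ.app (A ⊞ A)
  dc5 : ∀ A : C, d A ≫ d (A ⊞ A) ≫
      S.map (biprod.lift (biprod.fst ≫ biprod.fst) (biprod.snd ≫ biprod.snd)) = d A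
  dc6 : ∀ A : C, d A ≫ d (A ⊞ A) ≫
      S.map (biprod.lift
        (biprod.lift (biprod.fst ≫ biprod.fst) (biprod.snd ≫ biprod.fst))
        (biprod.lift (biprod.fst ≫ biprod.snd) (biprod.snd ≫ biprod.snd))) =
      d A ≫ d (A ⊞ A)

/-- `λ_A := ⟨S(π₁), S(π₁+π₄) ∘ ∂_{A×A}⟩ : S(A×A) ⟶ S(A) × S(A)`. -/
noncomputable def lamOf (S : Monad C) (p : DiffCombTrans S) (A : C) :
    S.obj (A ⊞ A) ⟶ S.obj A ⊞ S.obj A :=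
  biprod.lift (S.map biprod.fst)
    (p.d (A ⊞ A) ≫ S.map (biprod.fst ≫ biprod.fst + biprod.snd ≫ biprod.snd))

namespace DiffCombTrans

variable {S : Monad C} (p : DiffCombTrans S)

theorem d_map_fst_comp {A B : C} (f : A ⟶ B) : p.d A ≫ S.map (biprod.fst ≫ f) = 0 := by
  rw [S.map_comp, ← Category.assoc, p.dc1, zero_comp]

/-- Apply `S(f π₁ + g π₂ + h π₃)` to [DC.2]. -/
theorem d_map_desc_add {A B : C} (f g h : A ⟶ B) :
    p.d A ≫ S.map (biprod.desc f (g + h)) =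
      p.d A ≫ S.map (biprod.desc f g) + p.d A ≫ S.map (biprod.desc f h) := by
  have := congrArg (· ≫ S.map (biprod.desc f (biprod.desc g h))) (p.dc2 A)
  simp only [Preadditive.add_comp, Category.assoc, ← S.map_comp, biprod.lift_desc,
    zero_comp, add_zero, zero_add] at this
  simpa only [biprod.desc_eq, Preadditive.comp_add] using this

noncomputable def dMapDescAddHom {A B : C} (f : A ⟶ B) : (A ⟶ B) →+ (S.obj A ⟶ S.obj B) where
  toFun g := p.d A ≫ S.map (biprod.desc f g)
  map_zero' := by
    rw [biprod.desc_eq, comp_zero, add_zero, d_map_fst_comp]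
  map_add' := p.d_map_desc_add f

theorem d_map_desc_neg {A B : C} (f g : A ⟶ B) :
    p.d A ≫ S.map (biprod.desc f (-g)) = -(p.d A ≫ S.map (biprod.desc f g)) :=
  map_neg (p.dMapDescAddHom f) g

end DiffCombTrans

/-- `λ` is compatible with the negative map of the biproduct tangent structure:
`⟨π₁, −π₂⟩ ∘ λ_A = λ_A ∘ S(⟨π₁, −π₂⟩)`. -/
theorem lamOf_neg (S : Monad C) (p : DiffCombTrans S) (A : C) :
    lamOf S p A ≫ biprod.lift biprod.fst (-biprod.snd) =
      S.map (biprod.lift biprod.fst (-biprod.snd)) ≫ lamOf S p A := by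
  set n : A ⊞ A ⟶ A ⊞ A := biprod.lift biprod.fst (-biprod.snd)
  have hsum : biprod.map n n ≫ (biprod.fst ≫ biprod.fst + biprod.snd ≫ biprod.snd) =
      biprod.desc biprod.fst (-biprod.snd) := by
    ext <;> simp [n]
  apply biprod.hom_ext
  · simp [lamOf, n, ← S.map_comp]
  · calc (lamOf S p A ≫ biprod.lift biprod.fst (-biprod.snd)) ≫ biprod.snd
        = -(p.d (A ⊞ A) ≫ S.map (biprod.desc biprod.fst biprod.snd)) := by
          simp [lamOf, biprod.desc_eq]
      _ = p.d (A ⊞ A) ≫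
            S.map (biprod.map n n ≫ (biprod.fst ≫ biprod.fst + biprod.snd ≫ biprod.snd)) := by
          rw [hsum, p.d_map_desc_neg]
      _ = (S.map n ≫ lamOf S p A) ≫ biprod.snd := by
          rw [S.map_comp, reassoc_of% (p.natural n).symm]
          simp [lamOf]
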